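/- arXiv:1705.05739 — 2 statements merged into one kernel-verified Lean document; each statement's English description precedes it below -/
import Mathlib

section
/- A Fraïssé class consisting of rigid structures (no nontrivial automorphisms) with the hereditary property, the joint embedding property, and the Ramsey property has the amalgamation property. -/
open FirstOrder FirstOrder.Language

/-- A class `K` has the Ramsey property when for all `A, B ∈ K` and `k ≥ 2` there is
`C ∈ K` such that every `k`-coloring of the copies (embeddings) of `A` in `C` is
monochromatic on the copies of `A` inside some copy of `B` in `C`. -/
def RamseyProperty {L : FirstOrder.Language}
    (K : Set (CategoryTheory.Bundled.{w} L.Structure)) : Prop :=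
  ∀ (A B : CategoryTheory.Bundled.{w} L.Structure), A ∈ K → B ∈ K →
    ∀ k : ℕ, 2 ≤ k →
      ∃ C : CategoryTheory.Bundled.{w} L.Structure, C ∈ K ∧
        ∀ χ : (A ↪[L] C) → Fin k,
          ∃ e : B ↪[L] C, ∀ f g : A ↪[L] B, χ (e.comp f) = χ (e.comp g)

/-- A class of rigid structures (no nontrivial automorphisms) with the hereditary
property, the joint embedding property and the Ramsey property has the amalgamation
property (Nešetřil–Rödl). -/
theorem amalgamation_of_ramsey_rigid
    {L : FirstOrder.Language} (K : Set (CategoryTheory.Bundled.{w} L.Structure))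
    (hFG : ∀ A ∈ K, Structure.FG L A)
    (hrigid : ∀ A ∈ K, ∀ φ : A ≃[L] A, ∀ x : A, φ x = x)
    (hher : Hereditary K) (hjep : JointEmbedding K) (hram : RamseyProperty K) :
    Amalgamation K := by
  classical
  intro M N P MN MP hM hN hP
  obtain ⟨E, hE, ⟨NE⟩, ⟨PE⟩⟩ := hjep N hN P hP
  obtain ⟨D, hD, hmono⟩ := hram M E hM hE 2 le_rfl
  set χ : (M ↪[L] D) → Fin 2 :=
    fun h => if ∃ i : N ↪[L] D, h = i.comp MN then 0 else 1 with hχ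
  obtain ⟨e, he⟩ := hmono χ
  have h1 : χ (e.comp (NE.comp MN)) = 0 := by
    have hex : ∃ i : N ↪[L] D, e.comp (NE.comp MN) = i.comp MN :=
      ⟨e.comp NE, by ext x; simp⟩
    simp [hχ, hex]
  have h2 : χ (e.comp (PE.comp MP)) = 0 := by
    rw [← he (NE.comp MN) (PE.comp MP)]; exact h1
  rw [hχ] at h2
  by_cases hc : ∃ i : N ↪[L] D, e.comp (PE.comp MP) = i.comp MN
  · obtain ⟨i, hi⟩ := hc
    exact ⟨D, i, e.comp PE, hD, by rw [← hi]; ext x; simp⟩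
  · simp only [if_neg hc] at h2
    exact absurd h2 (by decide)
end

section
/- The map from (ℚ, <, Q₀, Q₁) (ℚ with a dense-codense partition Q₀, Q₁) to the dense local order S(2) obtained by orienting x ← y iff x < y and then reversing exactly the edges between points lying in different parts, is a bijection on underlying sets which induces a topological group isomorphism between Aut(ℚ, <, Q₀, Q₁) and the subgroup of Aut(S(2)) preserving each of the two parts. -/
/-- The tournament `S(2)` built from `(ℚ, <, Q₀, Q₁)`: there is an arc `x → y` iff
`x, y` lie in the same part and `y < x`, or they lie in different parts and `x < y`
(i.e. one orients `x ← y` iff `x < y` and then reverses exactly the arcs between the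
two parts). -/
def S2Arc (Q₀ : Set ℚ) (x y : ℚ) : Prop :=
  ((x ∈ Q₀ ↔ y ∈ Q₀) ∧ y < x) ∨ (¬(x ∈ Q₀ ↔ y ∈ Q₀) ∧ x < y)

/-- For a dense-codense partition `Q₀, Q₁` of `ℚ`, the identity on underlying sets
identifies `Aut(ℚ, <, Q₀, Q₁)` with the subgroup of `Aut(S(2))` preserving each of the
two parts: a permutation of `ℚ` preserving both parts is an automorphism of
`(ℚ, <)` iff it is an automorphism of the tournament `S(2)`. (In particular the two
groups are equal as topological subgroups of `Sym(ℚ)`.) -/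
theorem autQ2_eq_partPreserving_autS2
    (Q₀ Q₁ : Set ℚ) (hpart : Q₁ = Q₀ᶜ)
    (hQ₀dense : ∀ x y : ℚ, x < y → ∃ z ∈ Q₀, x < z ∧ z < y)
    (hQ₁dense : ∀ x y : ℚ, x < y → ∃ z ∈ Q₁, x < z ∧ z < y) :
    {σ : Equiv.Perm ℚ |
        (∀ x y : ℚ, σ x < σ y ↔ x < y) ∧
        (∀ x : ℚ, σ x ∈ Q₀ ↔ x ∈ Q₀) ∧ (∀ x : ℚ, σ x ∈ Q₁ ↔ x ∈ Q₁)} =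
    {σ : Equiv.Perm ℚ |
        (∀ x y : ℚ, S2Arc Q₀ (σ x) (σ y) ↔ S2Arc Q₀ x y) ∧
        (∀ x : ℚ, σ x ∈ Q₀ ↔ x ∈ Q₀) ∧ (∀ x : ℚ, σ x ∈ Q₁ ↔ x ∈ Q₁)} := by
  ext σ
  simp only [Set.mem_setOf_eq]
  constructor
  · rintro ⟨hord, h0, h1⟩
    refine ⟨fun x y => ?_, h0, h1⟩
    unfold S2Arc
    rw [hord, hord, h0 x, h0 y]
  · rintro ⟨harc, h0, h1⟩
    refine ⟨fun x y => ?_, h0, h1⟩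
    have key : ∀ a b : ℚ, a < b → σ a < σ b := by
      intro a b hab
      by_cases hs : a ∈ Q₀ ↔ b ∈ Q₀
      · have := (harc b a).2 (Or.inl ⟨hs.symm, hab⟩)
        rcases this with ⟨_, h⟩ | ⟨hne, _⟩
        · exact h
        · exact absurd ((h0 b).trans (hs.symm.trans (h0 a).symm)) hne
      · have := (harc a b).2 (Or.inr ⟨hs, hab⟩)
        rcases this with ⟨hsame, _⟩ | ⟨_, h⟩
        · exact absurd ((h0 a).symm.trans (hsame.trans (h0 b))) hs
        · exact h
    constructor
    · intro h
      rcases lt_trichotomy x y with h' | h' | h'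
      · exact h'
      · simp [h'] at h
      · exact absurd (key y x h') (asymm h)
    · exact key x y
end
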